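/- Let (A_A, A_B, A_C) be a three-composed graded quantum system of finite-dimensional factors generating A_Z, satisfying the commuting square condition for (A_AB, A_BC, A_B), and let ψ be a faithful state on A_Z. Define α(X) := ρ_{ψ_B}^{−1/2} E_AB(ρ_{ψ_BC}^{1/2} X ρ_{ψ_BC}^{1/2}) ρ_{ψ_B}^{−1/2} for X ∈ A_Z. Then every element of the even part A_A^+ of A_A is a fixed point of α, i.e. α(X) = X for all X ∈ A_A^+. -/

import Mathlib

open scoped ComplexOrder

/-- The full matrix algebra `M_N(ℂ)`, our model of a finite-dimensional factor. -/
abbrev Mat (N : ℕ) := Matrix (Fin N) (Fin N) ℂ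

variable {N : ℕ}

/-- The tracial state `τ` on `Mat N`. -/
noncomputable def tau (x : Mat N) : ℂ := x.trace / N

/-- Matrix logarithm via the continuous functional calculus. -/
noncomputable def mlog (x : Mat N) : Mat N := cfc Real.log x

/-- Matrix square root via the continuous functional calculus. -/
noncomputable def msqrt (x : Mat N) : Mat N := cfc Real.sqrt x

/-- Matrix inverse square root via the continuous functional calculus. -/
noncomputable def misqrt (x : Mat N) : Mat N := cfc (fun t : ℝ => (Real.sqrt t)⁻¹) x

/-- The entropy `Ŝ(ψ) = -ψ(log ρ_ψ) = -τ(ρ log ρ)` of the state with τ-density `ρ`. -/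
noncomputable def Shat (ρ : Mat N) : ℝ := -(tau (ρ * mlog ρ)).re

/-- The von Neumann entropy `S(ψ|_B) = -Tr_B(D log D) = Ŝ(ψ|_B) + log k` of the
restriction of a state to a subfactor `B ≅ M_k`, expressed through the τ-density `ρ`
of the restriction and the matrix size `k` of the subfactor. -/
noncomputable def Sres (ρ : Mat N) (k : ℕ) : ℝ := Shat ρ + Real.log k

/-- `ρ` is the density with respect to the tracial state `τ` of a state of `Mat N`. -/
def IsTauDensity (ρ : Mat N) : Prop := ρ.PosSemidef ∧ tau ρ = 1

/-- `E` is the τ-preserving conditional expectation onto the unital *-subalgebra `B`: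
it maps into `B`, fixes `B` pointwise, and `Tr(b x) = Tr(b (E x))` for all `b ∈ B`.
These properties determine `E` uniquely. -/
def IsCondExp (B : StarSubalgebra ℂ (Mat N)) (E : Mat N →ₗ[ℂ] Mat N) : Prop :=
  (∀ x, E x ∈ B) ∧ (∀ b ∈ B, E b = b) ∧
    (∀ x : Mat N, ∀ b ∈ B, (b * x).trace = (b * E x).trace)

/-- `B` is a subfactor: its relative center is trivial (so `B` is a full matrix algebra). -/
def IsFactorSub (B : StarSubalgebra ℂ (Mat N)) : Prop :=
  ∀ x ∈ B, (∀ y ∈ B, x * y = y * x) → ∃ c : ℂ, x = c • (1 : Mat N)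

/-- The commuting square condition: `B = AB ⊓ BC` and `E_AB ∘ E_BC = E_BC ∘ E_AB = E_B`. -/
def CommSquare (AB BC B : StarSubalgebra ℂ (Mat N))
    (EAB EBC EB : Mat N →ₗ[ℂ] Mat N) : Prop :=
  IsCondExp AB EAB ∧ IsCondExp BC EBC ∧ IsCondExp B EB ∧
    B = AB ⊓ BC ∧ (∀ x, EAB (EBC x) = EB x) ∧ (∀ x, EBC (EAB x) = EB x)

open Classical in
/-- Relative entropy `H(ρ₁, ρ₂) = τ(ρ₁ (log ρ₁ - log ρ₂))` of two τ-densities, equal to `+∞`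
unless the support of `ρ₁` is dominated by the support of `ρ₂` (for positive semidefinite
matrices the support condition is the inclusion of kernels `ker ρ₂ ⊆ ker ρ₁`). -/
noncomputable def relEnt (ρ₁ ρ₂ : Mat N) : EReal :=
  if ∀ v : Fin N → ℂ, ρ₂.mulVec v = 0 → ρ₁.mulVec v = 0 then
    (((tau (ρ₁ * (mlog ρ₁ - mlog ρ₂))).re : ℝ) : EReal)
  else ⊤

/-- Complete positivity of a linear map on `Mat N`. -/
def IsCP (E : Mat N →ₗ[ℂ] Mat N) : Prop :=
  ∀ (k : ℕ) (x a : Fin k → Mat N),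
    (∑ i, ∑ j, star (a i) * E (star (x i) * x j) * a j).PosSemidef

/-- `p` is a minimal projection of the subalgebra `B`. -/
def IsMinProj (B : StarSubalgebra ℂ (Mat N)) (p : Mat N) : Prop :=
  p ∈ B ∧ p.IsHermitian ∧ p * p = p ∧ p ≠ 0 ∧
    ∀ q ∈ B, q.IsHermitian → q * q = q → q * p = q → q = 0 ∨ q = p

/-- The subfactor `B` of `Mat N` has matrix size `k` (i.e. `B ≅ M_k`) in the sense that its
minimal projections have ambient matrix trace `N / k`; this encodes the assumption that the
ambient matrix trace restricts on `B` to `N/k` times the canonical matrix trace of `B`. -/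
def HasMatSize (B : StarSubalgebra ℂ (Mat N)) (k : ℕ) : Prop :=
  ∀ p, IsMinProj B p → Matrix.trace p = ((N : ℂ) / k)

/-- `Θ` is a grading: an involutive *-automorphism. -/
def IsGrading (Θ : Mat N ≃⋆ₐ[ℂ] Mat N) : Prop := ∀ x, Θ (Θ x) = x

/-- The subalgebra `A` is invariant under the grading. -/
def ThetaInvariant (Θ : Mat N ≃⋆ₐ[ℂ] Mat N) (A : StarSubalgebra ℂ (Mat N)) : Prop :=
  ∀ x ∈ A, Θ x ∈ A

/-- Graded commutation relations between (the subalgebras of) two disjoint regions: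
even elements of one commute with all elements of the other, odd elements anticommute. -/
def GradedComm (Θ : Mat N ≃⋆ₐ[ℂ] Mat N) (A C : StarSubalgebra ℂ (Mat N)) : Prop :=
  ∀ x ∈ A, ∀ y ∈ C,
    ((Θ x = x ∨ Θ y = y) → x * y = y * x) ∧
      (Θ x = -x → Θ y = -y → x * y + y * x = 0)

/-- `ω` is a state (positive normalized linear functional). -/
def IsState (ω : Mat N →ₗ[ℂ] ℂ) : Prop :=
  ω 1 = 1 ∧ ∀ x : Mat N, 0 ≤ ω (star x * x)

/-- Markov property of the state `ω` with respect to a triplet with first algebra `AA` and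
pair algebra `AB`: there is a quasi-conditional expectation (a completely positive map into
`AB` which is a module map over `AA`) fixing `AA` pointwise and preserving `ω`. -/
def IsMarkovState (AA AB : StarSubalgebra ℂ (Mat N)) (ω : Mat N →ₗ[ℂ] ℂ) : Prop :=
  ∃ E : Mat N →ₗ[ℂ] Mat N, IsCP E ∧ (∀ x, E x ∈ AB) ∧
    (∀ c ∈ AA, ∀ x, E (c * x) = c * E x) ∧ (∀ c ∈ AA, E c = c) ∧
    ∀ x, ω (E x) = ω x

/-- Markov property, formulated for the state with τ-density `ρ`. -/
def IsMarkovDensity (AA AB : StarSubalgebra ℂ (Mat N)) (ρ : Mat N) : Prop :=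
  ∃ E : Mat N →ₗ[ℂ] Mat N, IsCP E ∧ (∀ x, E x ∈ AB) ∧
    (∀ c ∈ AA, ∀ x, E (c * x) = c * E x) ∧ (∀ c ∈ AA, E c = c) ∧
    ∀ x, tau (ρ * E x) = tau (ρ * x)

/-- The restriction of `ω` to the subalgebra generated by `AA` and `AC` is separable:
a convex combination of product states for the pair `(AA, AC)`. -/
def SeparableOn (AA AC : StarSubalgebra ℂ (Mat N)) (ω : Mat N →ₗ[ℂ] ℂ) : Prop :=
  ∃ (n : ℕ) (lam : Fin n → ℝ) (ωi : Fin n → (Mat N →ₗ[ℂ] ℂ)),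
    (∀ i, 0 ≤ lam i) ∧ (∑ i, lam i = 1) ∧ (∀ i, IsState (ωi i)) ∧
    (∀ i, ∀ x ∈ AA, ∀ y ∈ AC, ωi i (x * y) = ωi i x * ωi i y) ∧
    ∀ z ∈ (AA ⊔ AC : StarSubalgebra ℂ (Mat N)), ω z = ∑ i, (lam i : ℂ) * ωi i z

/-- The conditional expectation `E` is sufficient for the pair of states with τ-densities
`ρ₁, ρ₂`: some completely positive trace-preserving (recovery) map `T` recovers the densities
from their compressions `E ρ₁`, `E ρ₂` (recall that the τ-density of `ψ ∘ E` is `E ρ_ψ`). -/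
def IsSufficient (E : Mat N →ₗ[ℂ] Mat N) (ρ₁ ρ₂ : Mat N) : Prop :=
  ∃ T : Mat N →ₗ[ℂ] Mat N, IsCP T ∧ (∀ x, (T x).trace = x.trace) ∧
    T (E ρ₁) = ρ₁ ∧ T (E ρ₂) = ρ₂

/-!
An even element `X` of `A_A` commutes with `A_BC` (graded locality), hence with the functional
calculus of `E_BC ρ`; so the conjugation by `(E_BC ρ)^{1/2}` collapses to `X E_BC ρ`, the
module property of `E_AB` and the commuting square turn `E_AB (X E_BC ρ)` into `X E_B ρ`, and
`X` commutes past `(E_B ρ)^{-1/2}`, which cancels `E_B ρ`. The only analytic input is that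
`E_B ρ` and `E_BC ρ` have strictly positive spectrum, which holds for the conditional expectation
of any faithful density.
-/

namespace Matrix

variable {n 𝕜 : Type*} [Fintype n] [RCLike 𝕜]

theorem PosDef.eq_zero_of_conjTranspose_mul_mul_eq_zero [DecidableEq n] {ρ B : Matrix n n 𝕜}
    (hρ : ρ.PosDef) (h : Bᴴ * ρ * B = 0) : B = 0 := by
  refine ext_of_mulVec_single fun j => ?_
  by_contra hne
  rw [zero_mulVec] at hne
  have hpos := hρ.dotProduct_mulVec_pos hne
  have hzero : star (B *ᵥ Pi.single j 1) ⬝ᵥ (ρ *ᵥ (B *ᵥ Pi.single j 1)) = 0 := by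
    rw [star_mulVec, dotProduct_mulVec, vecMul_vecMul, ← dotProduct_mulVec, mulVec_mulVec, h,
      zero_mulVec, dotProduct_zero]
  exact (hzero ▸ hpos).false

end Matrix

theorem StarSubalgebra.cfc_mem_of_mem {n : Type*} [Fintype n] [DecidableEq n]
    (S : StarSubalgebra ℂ (Matrix n n ℂ)) {a : Matrix n n ℂ} (ha : a ∈ S) (f : ℝ → ℝ) :
    cfc f a ∈ S :=
  have : IsClosed (S : Set (Matrix n n ℂ)) :=
    S.toSubalgebra.toSubmodule.closed_of_finiteDimensional
  cfc_mem f ha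

theorem StarSubalgebra.eq_of_forall_trace_mul_eq {n : Type*} [Fintype n] [DecidableEq n]
    (S : StarSubalgebra ℂ (Matrix n n ℂ)) {y z : Matrix n n ℂ} (hy : y ∈ S) (hz : z ∈ S)
    (h : ∀ b ∈ S, (b * y).trace = (b * z).trace) : y = z := by
  have hd := h (star (y - z)) (star_mem (sub_mem hy hz))
  rw [← sub_eq_zero, ← Matrix.trace_sub, ← mul_sub, Matrix.star_eq_conjTranspose,
    Matrix.trace_conjTranspose_mul_self_eq_zero_iff] at hd
  exact sub_eq_zero.mp hd

theorem GradedComm.le_centralizer {N : ℕ} {Θ : Mat N ≃⋆ₐ[ℂ] Mat N}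
    {A C : StarSubalgebra ℂ (Mat N)} (h : GradedComm Θ A C) {x : Mat N} (hx : x ∈ A)
    (hxe : Θ x = x) : C ≤ StarSubalgebra.centralizer ℂ {x} := by
  intro y hy
  simp only [StarSubalgebra.mem_centralizer_iff, Set.mem_singleton_iff, forall_eq]
  exact ⟨(h x hx y hy).1 (.inl hxe),
    (h (star x) (star_mem hx) y hy).1 (.inl (by rw [map_star, hxe]))⟩

namespace IsCondExp

open scoped Matrix

variable {N : ℕ} {B : StarSubalgebra ℂ (Mat N)} {E : Mat N →ₗ[ℂ] Mat N}

theorem map_mul_left (hE : IsCondExp B E) {x : Mat N} (hx : x ∈ B) (y : Mat N) :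
    E (x * y) = x * E y :=
  StarSubalgebra.eq_of_forall_trace_mul_eq B (hE.1 _) (mul_mem hx (hE.1 y)) fun b hb => by
    rw [← hE.2.2 _ b hb, ← mul_assoc, ← mul_assoc, hE.2.2 y _ (mul_mem hb hx)]

theorem map_star (hE : IsCondExp B E) (x : Mat N) : E (star x) = star (E x) :=
  StarSubalgebra.eq_of_forall_trace_mul_eq B (hE.1 _) (star_mem (hE.1 x)) fun b hb => by
    have hstar : ∀ y : Mat N, (b * star y).trace = star (star b * y).trace := fun y => by
      rw [← Matrix.trace_conjTranspose, ← Matrix.star_eq_conjTranspose, star_mul, star_star,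
        Matrix.trace_mul_comm]
    rw [← hE.2.2 _ b hb, hstar, hstar, hE.2.2 x _ (star_mem hb)]

theorem isSelfAdjoint_apply (hE : IsCondExp B E) {x : Mat N} (hx : IsSelfAdjoint x) :
    IsSelfAdjoint (E x) := by
  rw [IsSelfAdjoint, ← hE.map_star, hx.star_eq]

open scoped MatrixOrder in
theorem spectrum_pos_of_posDef (hE : IsCondExp B E) {ρ : Mat N} (hρ : ρ.PosDef) :
    ∀ t ∈ spectrum ℝ (E ρ), 0 < t := by
  set σ := E ρ
  have hσ : IsSelfAdjoint σ := hE.isSelfAdjoint_apply hρ.isHermitian.isSelfAdjoint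
  have hcont (f : ℝ → ℝ) : ContinuousOn f (spectrum ℝ σ) := σ.finite_real_spectrum.continuousOn f
  -- `p` is the spectral projection of `σ` onto `(-∞, 0]`: `τ(p ρ) = τ(p σ) ≤ 0` forces `p = 0`.
  let f : ℝ → ℝ := fun t => if t ≤ 0 then 1 else 0
  set p := cfc f σ
  have hp : pᴴ = p := cfc_predicate f σ
  have hpp : p * p = p := by
    rw [← cfc_mul f f σ (hcont f) (hcont f)]
    exact cfc_congr fun t _ => by by_cases ht : t ≤ 0 <;> simp [f, ht]
  have hpσ : 0 ≤ -(p * σ) := by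
    rw [← cfc_id ℝ σ, ← cfc_mul f id σ (hcont f) (hcont id), ← cfc_neg]
    refine cfc_nonneg fun t _ => ?_
    by_cases ht : t ≤ 0 <;> simp [f, ht]
  have htr : (pᴴ * ρ * p).trace = (p * σ).trace := by
    rw [hp, Matrix.trace_mul_cycle, hpp, ← hE.2.2 ρ p (B.cfc_mem_of_mem (hE.1 ρ) f)]
  have hpsd : (pᴴ * ρ * p).PosSemidef := hρ.posSemidef.conjTranspose_mul_mul_same p
  have hzero : pᴴ * ρ * p = 0 := by
    rw [← hpsd.trace_eq_zero_iff]
    refine le_antisymm ?_ hpsd.trace_nonneg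
    rw [htr, ← neg_nonneg, ← Matrix.trace_neg]
    exact (Matrix.nonneg_iff_posSemidef.mp hpσ).trace_nonneg
  have hf : (spectrum ℝ σ).EqOn f 0 := by
    refine eqOn_of_cfc_eq_cfc ?_ (hcont f) (hcont 0)
    rw [cfc_zero]
    exact hρ.eq_zero_of_conjTranspose_mul_mul_eq_zero hzero
  intro t ht
  by_contra hle
  simpa [f, not_lt.mp hle] using hf ht

end IsCondExp

section SpectralRoots

variable {N : ℕ} {a : Mat N}

theorem msqrt_mul_self (ha : IsSelfAdjoint a) (hspec : ∀ t ∈ spectrum ℝ a, 0 ≤ t) :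
    msqrt a * msqrt a = a := by
  rw [msqrt, ← cfc_mul Real.sqrt Real.sqrt a]
  nth_rewrite 2 [← cfc_id ℝ a]
  exact cfc_congr fun t ht => Real.mul_self_sqrt (hspec t ht)

theorem misqrt_mul_mul_self (ha : IsSelfAdjoint a) (hspec : ∀ t ∈ spectrum ℝ a, 0 < t) :
    misqrt a * a * misqrt a = 1 := by
  have hcont (f : ℝ → ℝ) : ContinuousOn f (spectrum ℝ a) := a.finite_real_spectrum.continuousOn f
  nth_rewrite 2 [← cfc_id ℝ a]
  rw [misqrt, ← cfc_mul _ id a (hcont _) (hcont _), ← cfc_mul _ _ a (hcont _) (hcont _),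
    ← cfc_one ℝ a]
  refine cfc_congr fun t ht => ?_
  have hexpand : (√t)⁻¹ * id t * (√t)⁻¹ = t / (√t * √t) := by simp only [id]; ring
  rw [hexpand, Real.mul_self_sqrt (hspec t ht).le, div_self (hspec t ht).ne', Pi.one_apply]

end SpectralRoots

theorem stmt10_general {N : ℕ}
    (Θ : Mat N ≃⋆ₐ[ℂ] Mat N)
    (SA SB SC : StarSubalgebra ℂ (Mat N))
    (hABc : GradedComm Θ SA SB) (hACc : GradedComm Θ SA SC)
    (EAB EBC EB : Mat N →ₗ[ℂ] Mat N)
    (hsq : CommSquare (SA ⊔ SB) (SB ⊔ SC) SB EAB EBC EB)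
    (ρ : Mat N) (hρpd : ρ.PosDef) :
    ∀ X ∈ SA, Θ X = X →
      misqrt (EB ρ) * EAB (msqrt (EBC ρ) * X * msqrt (EBC ρ)) * misqrt (EB ρ) = X := by
  intro X hX hXeven
  obtain ⟨hEAB, hEBC, hEB, -, hEAB_EBC, -⟩ := hsq
  have hρ : IsSelfAdjoint ρ := hρpd.isHermitian.isSelfAdjoint
  have hcomm : ∀ y ∈ SB ⊔ SC, Commute X y := fun y hy =>
    ((StarSubalgebra.mem_centralizer_iff ℂ).mp
      (sup_le (hABc.le_centralizer hX hXeven) (hACc.le_centralizer hX hXeven) hy) X rfl).1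
  have hXs : Commute X (msqrt (EBC ρ)) := ((hcomm _ (hEBC.1 ρ)).symm.cfc_real _).symm
  have hXw : Commute X (misqrt (EB ρ)) :=
    ((hcomm _ (le_sup_left (a := SB) (hEB.1 ρ))).symm.cfc_real _).symm
  calc misqrt (EB ρ) * EAB (msqrt (EBC ρ) * X * msqrt (EBC ρ)) * misqrt (EB ρ)
      = misqrt (EB ρ) * EAB (X * EBC ρ) * misqrt (EB ρ) := by
        rw [← hXs.eq, mul_assoc X, msqrt_mul_self (hEBC.isSelfAdjoint_apply hρ)
          fun t ht => (hEBC.spectrum_pos_of_posDef hρpd t ht).le]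
    _ = X * (misqrt (EB ρ) * EB ρ * misqrt (EB ρ)) := by
        rw [hEAB.map_mul_left (le_sup_left (b := SB) hX), hEAB_EBC, ← mul_assoc, ← hXw.eq]
        simp only [mul_assoc]
    _ = X := by
        rw [misqrt_mul_mul_self (hEB.isSelfAdjoint_apply hρ) (hEB.spectrum_pos_of_posDef hρpd),
          mul_one]

/-- for a three-composed graded quantum system with commuting square and a
faithful state `ψ` (τ-density `ρ`), every even element of `S_A` is a fixed point of
`α(X) = ρ_{ψB}^{-1/2} E_AB(ρ_{ψBC}^{1/2} X ρ_{ψBC}^{1/2}) ρ_{ψB}^{-1/2}`. -/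
theorem stmt10 {N : ℕ} (hN : 0 < N)
    (Θ : Mat N ≃⋆ₐ[ℂ] Mat N) (hΘ : IsGrading Θ)
    (SA SB SC : StarSubalgebra ℂ (Mat N))
    (hAinv : ThetaInvariant Θ SA) (hBinv : ThetaInvariant Θ SB) (hCinv : ThetaInvariant Θ SC)
    (hfA : IsFactorSub SA) (hfB : IsFactorSub SB) (hfC : IsFactorSub SC)
    (hABc : GradedComm Θ SA SB) (hACc : GradedComm Θ SA SC) (hBCc : GradedComm Θ SB SC)
    (hgen : SA ⊔ SB ⊔ SC = ⊤)
    (EAB EBC EB : Mat N →ₗ[ℂ] Mat N)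
    (hsq : CommSquare (SA ⊔ SB) (SB ⊔ SC) SB EAB EBC EB)
    (ρ : Mat N) (hρpd : ρ.PosDef) (hρ1 : tau ρ = 1) :
    ∀ X ∈ SA, Θ X = X →
      misqrt (EB ρ) * EAB (msqrt (EBC ρ) * X * msqrt (EBC ρ)) * misqrt (EB ρ) = X :=
  stmt10_general Θ SA SB SC hABc hACc EAB EBC EB hsq ρ hρpd
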